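/- arXiv:1309.7766 — 5 statements merged into one kernel-verified Lean document; each statement's English description precedes it below -/
import Mathlib

section
/- Let q ∈ [0, 1) and let (φ_k) be a sequence of nonnegative real numbers. Then the sequence s_k := Σ_{j=0}^{k} q^j·φ_{k−j} converges to 0 as k → ∞ if and only if φ_k converges to 0 as k → ∞. -/
/-- For `q ∈ [0,1)` and a nonnegative sequence `(φ_k)`, the geometric convolution
`s_k = Σ_{j=0}^{k} q^j·φ_{k−j}` tends to `0` if and only if `φ_k` tends to `0`. -/
theorem geometric_convolution_tendsto_zero_iff
    (q : ℝ) (hq0 : 0 ≤ q) (hq1 : q < 1)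
    (φ : ℕ → ℝ) (hφ : ∀ k, 0 ≤ φ k) :
    Filter.Tendsto (fun k => ∑ j ∈ Finset.range (k + 1), q ^ j * φ (k - j))
        Filter.atTop (nhds 0) ↔
      Filter.Tendsto φ Filter.atTop (nhds 0) := by
  constructor
  · intro hs
    refine squeeze_zero hφ (fun k => ?_) hs
    have : q ^ 0 * φ (k - 0) ≤ ∑ j ∈ Finset.range (k + 1), q ^ j * φ (k - j) :=
      Finset.single_le_sum (fun j _ => mul_nonneg (pow_nonneg hq0 j) (hφ _))
        (Finset.mem_range.mpr (Nat.succ_pos k))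
    simpa using this
  · intro hφ0
    -- φ is bounded
    obtain ⟨B, hB⟩ : ∃ B : ℝ, ∀ k, φ k ≤ B := by
      obtain ⟨B, hB⟩ := hφ0.bddAbove_range
      exact ⟨B, fun k => hB ⟨k, rfl⟩⟩
    set f : ℕ → ℕ → ℝ := fun k j => if j ≤ k then q ^ j * φ (k - j) else 0 with hf
    have hsum_eq : ∀ k, ∑ j ∈ Finset.range (k + 1), q ^ j * φ (k - j) = ∑' j, f k j := by
      intro k
      rw [tsum_eq_sum (s := Finset.range (k + 1)) (fun j hj => by
        have : ¬ j ≤ k := by simpa [Nat.lt_succ_iff] using hj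
        simp [hf, this])]
      exact Finset.sum_congr rfl fun j hj => by
        simp [hf, Nat.lt_succ_iff.mp (Finset.mem_range.mp hj)]
    have key : Filter.Tendsto (fun k => ∑' j, f k j) Filter.atTop (nhds (∑' _ : ℕ, (0:ℝ))) := by
      apply tendsto_tsum_of_dominated_convergence
        (bound := fun j => q ^ j * B) (g := fun _ => 0)
      · exact (summable_geometric_of_lt_one hq0 hq1).mul_right B
      · intro j
        have h1 : Filter.Tendsto (fun k => q ^ j * φ (k - j)) Filter.atTop (nhds 0) := by
          have : Filter.Tendsto (fun k : ℕ => φ (k - j)) Filter.atTop (nhds 0) :=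
            hφ0.comp (Filter.tendsto_atTop_atTop.mpr fun b => ⟨b + j, fun a ha => by omega⟩)
          simpa using this.const_mul (q ^ j)
        refine h1.congr' ?_
        filter_upwards [Filter.eventually_ge_atTop j] with k hk
        simp [hf, hk]
      · refine Filter.Eventually.of_forall fun k j => ?_
        by_cases hj : j ≤ k
        · simp only [hf, if_pos hj]
          rw [Real.norm_of_nonneg (mul_nonneg (pow_nonneg hq0 j) (hφ _))]
          exact mul_le_mul_of_nonneg_left (hB _) (pow_nonneg hq0 j)
        · simp only [hf, if_neg hj, norm_zero]
          exact mul_nonneg (pow_nonneg hq0 j) ((hφ 0).trans (hB 0))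
    simp only [tsum_zero] at key
    exact key.congr fun k => (hsum_eq k).symm
end

section
/- Let Ω ⊆ ℝⁿ be a closed set, b ∈ ℝⁿ, and let A : Ω → ℝ^{n×n} be a continuous map whose values are invertible matrices. Assume that the map f(x) := A(x)⁻¹ b maps Ω into Ω and is Lipschitz continuous with Lipschitz constant L < 1, so that it has a unique fixed point x* ∈ Ω. Let 0 < τ_r < 1 and let (x^k) be a sequence in Ω satisfying the relative termination criterion ‖A(x^k) x^{k+1} − b‖ ≤ τ_r·‖A(x^k) x^k − b‖ for all k ≥ 0 (Euclidean norm). If x^k converges to a limit x_ε ∈ Ω, then x_ε = x*, independent of the choice of τ_r ∈ (0,1). -/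
/-- Inexact Picard iteration with the relative termination criterion
`‖A(x^k) x^{k+1} − b‖ ≤ τ_r·‖A(x^k) x^k − b‖` converges to the exact fixed point `x*` of
`f(x) = A(x)⁻¹ b`, independent of the choice of `τ_r ∈ (0,1)`. -/
theorem picard_iteration_relative_criterion_exact_limit
    {n : ℕ} (Ω : Set (EuclideanSpace ℝ (Fin n))) (hΩ : IsClosed Ω)
    (b : EuclideanSpace ℝ (Fin n))
    (A : EuclideanSpace ℝ (Fin n) → Matrix (Fin n) (Fin n) ℝ)
    (hAcont : Continuous A)
    (hAinv : ∀ x ∈ Ω, IsUnit (A x))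
    (f : EuclideanSpace ℝ (Fin n) → EuclideanSpace ℝ (Fin n))
    (hf : ∀ x, f x = Matrix.toEuclideanCLM (𝕜 := ℝ) (A x)⁻¹ b)
    (hself : ∀ x ∈ Ω, f x ∈ Ω)
    (L : ℝ) (hL0 : 0 ≤ L) (hL1 : L < 1)
    (hlip : ∀ x ∈ Ω, ∀ y ∈ Ω, ‖f x - f y‖ ≤ L * ‖x - y‖)
    (xstar : EuclideanSpace ℝ (Fin n)) (hxstarΩ : xstar ∈ Ω)
    (hfix : f xstar = xstar)
    (huniq : ∀ y ∈ Ω, f y = y → y = xstar)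
    (τr : ℝ) (hτr0 : 0 < τr) (hτr1 : τr < 1)
    (x : ℕ → EuclideanSpace ℝ (Fin n)) (hxΩ : ∀ k, x k ∈ Ω)
    (hcrit : ∀ k, ‖Matrix.toEuclideanCLM (𝕜 := ℝ) (A (x k)) (x (k + 1)) - b‖ ≤
      τr * ‖Matrix.toEuclideanCLM (𝕜 := ℝ) (A (x k)) (x k) - b‖)
    (xeps : EuclideanSpace ℝ (Fin n)) (hxepsΩ : xeps ∈ Ω)
    (hconv : Filter.Tendsto x Filter.atTop (nhds xeps)) :
    xeps = xstar := by
  have hT : Continuous (fun M : Matrix (Fin n) (Fin n) ℝ =>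
      (Matrix.toEuclideanCLM (𝕜 := ℝ) M : EuclideanSpace ℝ (Fin n) →L[ℝ] EuclideanSpace ℝ (Fin n))) := by
    exact LinearMap.continuous_of_finiteDimensional
      ({ toFun := fun M => Matrix.toEuclideanCLM (𝕜 := ℝ) M,
         map_add' := map_add _, map_smul' := map_smul _ } :
        Matrix (Fin n) (Fin n) ℝ →ₗ[ℝ] (EuclideanSpace ℝ (Fin n) →L[ℝ] EuclideanSpace ℝ (Fin n)))
  have happ : Continuous (fun p : (EuclideanSpace ℝ (Fin n) →L[ℝ] EuclideanSpace ℝ (Fin n)) ×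
      EuclideanSpace ℝ (Fin n) => p.1 p.2) := isBoundedBilinearMap_apply.continuous
  set R : EuclideanSpace ℝ (Fin n) :=
    Matrix.toEuclideanCLM (𝕜 := ℝ) (A xeps) xeps - b with hR
  have hg : ∀ (y : ℕ → EuclideanSpace ℝ (Fin n)),
      Filter.Tendsto y Filter.atTop (nhds xeps) →
      Filter.Tendsto (fun k => Matrix.toEuclideanCLM (𝕜 := ℝ) (A (x k)) (y k) - b)
        Filter.atTop (nhds R) := by
    intro y hy
    have h1 : Filter.Tendsto (fun k =>
        ((Matrix.toEuclideanCLM (𝕜 := ℝ) (A (x k)) : EuclideanSpace ℝ (Fin n) →L[ℝ] _), y k))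
        Filter.atTop (nhds ((Matrix.toEuclideanCLM (𝕜 := ℝ) (A xeps) : _ →L[ℝ] _), xeps)) :=
      Filter.Tendsto.prodMk_nhds ((hT.comp hAcont).continuousAt.tendsto.comp hconv) hy
    exact ((happ.continuousAt.tendsto.comp h1).sub tendsto_const_nhds)
  have h0 := hg x hconv
  have h1 := hg (fun k => x (k + 1)) (hconv.comp (Filter.tendsto_add_atTop_nat 1))
  have hle : ‖R‖ ≤ τr * ‖R‖ := by
    refine le_of_tendsto_of_tendsto' (h1.norm) ((h0.norm).const_mul τr) hcrit
  have hRnorm : ‖R‖ = 0 := by nlinarith [norm_nonneg R]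
  have hR0 : Matrix.toEuclideanCLM (𝕜 := ℝ) (A xeps) xeps = b := by
    have := norm_eq_zero.mp hRnorm
    rw [hR, sub_eq_zero] at this; exact this
  apply huniq xeps hxepsΩ
  rw [hf, ← hR0]
  have hinv : (A xeps)⁻¹ * A xeps = 1 :=
    Matrix.nonsing_inv_mul _ ((Matrix.isUnit_iff_isUnit_det _).mp (hAinv xeps hxepsΩ))
  calc Matrix.toEuclideanCLM (𝕜 := ℝ) (A xeps)⁻¹ (Matrix.toEuclideanCLM (𝕜 := ℝ) (A xeps) xeps)
        = Matrix.toEuclideanCLM (𝕜 := ℝ) ((A xeps)⁻¹ * A xeps) xeps := by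
          rw [map_mul]; rfl
      _ = xeps := by rw [hinv, map_one]; rfl
end

section
/- Let Ω₁, Ω₂ ⊆ ℝⁿ be closed sets, F : Ω₁ → Ω₂ Lipschitz continuous with constant L_F, S : Ω₂ → Ω₁ Lipschitz continuous with constant L_S, with L_S·L_F < 1, and let x* ∈ Ω₁ be a fixed point of S∘F. Let (x^k) ⊆ Ω₁, (ε_k), (δ_k) ⊆ ℝⁿ satisfy F(x^k) + ε_k ∈ Ω₂ and x^{k+1} = S(F(x^k) + ε_k) + δ_k for all k ≥ 0. Then for every k ≥ 0, ‖x^{k+1} − x*‖ ≤ (L_S·L_F)^{k+1}·‖x⁰ − x*‖ + Σ_{j=0}^{k} L_S^{j+1}·L_F^{j}·‖ε_{k−j}‖ + Σ_{j=0}^{k} (L_S·L_F)^{j}·‖δ_{k−j}‖. -/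
/-!
One step of the perturbed iteration contracts the error by `L_S L_F` and adds `L_S ‖ε_k‖ + ‖δ_k‖`,
because `x* = S(F x*)` lets both Lipschitz estimates be taken against `x*`. Unrolling this linear
recursive inequality (discrete Grönwall with constant factor) gives the accumulated bound.
-/

open Finset

theorem le_pow_mul_add_sum_of_le_mul_add {R : Type*} [CommSemiring R] [PartialOrder R]
    [IsOrderedRing R] {u b : ℕ → R} {q : R} (hq : 0 ≤ q) (hu : ∀ k, u (k + 1) ≤ q * u k + b k)
    (k : ℕ) :
    u (k + 1) ≤ q ^ (k + 1) * u 0 + ∑ j ∈ range (k + 1), q ^ j * b (k - j) := by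
  have h := discrete_gronwall_prod_general (c := fun _ => q) (fun k _ => hu k) (fun _ _ => hq)
    (Nat.zero_le (k + 1))
  rw [← sum_range_reflect]
  convert h using 2
  · simp [mul_comm]
  · refine sum_congr (by simp) fun j hj => ?_
    have hjk : j ≤ k := Nat.lt_succ_iff.mp (mem_Ico.mp hj).2
    simp [mul_comm, Nat.sub_sub_self hjk]

theorem norm_perturbed_nested_step_sub_le {E G : Type*} [SeminormedAddCommGroup E]
    [SeminormedAddCommGroup G] {s : Set E} {t : Set G} {F : E → G} {S : G → E} {LF LS : ℝ}
    (hLS : 0 ≤ LS) (hF : ∀ x ∈ s, ∀ y ∈ s, ‖F x - F y‖ ≤ LF * ‖x - y‖)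
    (hS : ∀ x ∈ t, ∀ y ∈ t, ‖S x - S y‖ ≤ LS * ‖x - y‖) {x xstar : E} {ε : G} {δ : E}
    (hx : x ∈ s) (hxstar : xstar ∈ s) (hFxstar : F xstar ∈ t) (hFx : F x + ε ∈ t)
    (hfix : S (F xstar) = xstar) :
    ‖S (F x + ε) + δ - xstar‖ ≤ LS * LF * ‖x - xstar‖ + LS * ‖ε‖ + ‖δ‖ := by
  have hinner : ‖F x + ε - F xstar‖ ≤ LF * ‖x - xstar‖ + ‖ε‖ :=
    calc ‖F x + ε - F xstar‖ = ‖(F x - F xstar) + ε‖ := by rw [add_sub_right_comm]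
      _ ≤ ‖F x - F xstar‖ + ‖ε‖ := norm_add_le _ _
      _ ≤ LF * ‖x - xstar‖ + ‖ε‖ := by gcongr; exact hF x hx xstar hxstar
  calc ‖S (F x + ε) + δ - xstar‖ = ‖(S (F x + ε) - S (F xstar)) + δ‖ := by
        rw [hfix, add_sub_right_comm]
    _ ≤ ‖S (F x + ε) - S (F xstar)‖ + ‖δ‖ := norm_add_le _ _
    _ ≤ LS * (LF * ‖x - xstar‖ + ‖ε‖) + ‖δ‖ := by
        gcongr
        exact (hS _ hFx _ hFxstar).trans (by gcongr)
    _ = LS * LF * ‖x - xstar‖ + LS * ‖ε‖ + ‖δ‖ := by ring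

theorem nested_perturbed_accumulated_bound_general
    {n : ℕ} (Ω₁ Ω₂ : Set (EuclideanSpace ℝ (Fin n)))
    (F S : EuclideanSpace ℝ (Fin n) → EuclideanSpace ℝ (Fin n))
    (hFmap : ∀ x ∈ Ω₁, F x ∈ Ω₂)
    (LF LS : ℝ) (hLF0 : 0 ≤ LF) (hLS0 : 0 ≤ LS)
    (hFlip : ∀ x ∈ Ω₁, ∀ y ∈ Ω₁, ‖F x - F y‖ ≤ LF * ‖x - y‖)
    (hSlip : ∀ x ∈ Ω₂, ∀ y ∈ Ω₂, ‖S x - S y‖ ≤ LS * ‖x - y‖)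
    (xstar : EuclideanSpace ℝ (Fin n)) (hxstarΩ : xstar ∈ Ω₁)
    (hfix : S (F xstar) = xstar)
    (x ε δ : ℕ → EuclideanSpace ℝ (Fin n))
    (hxΩ : ∀ k, x k ∈ Ω₁)
    (hFxΩ : ∀ k, F (x k) + ε k ∈ Ω₂)
    (hiter : ∀ k, x (k + 1) = S (F (x k) + ε k) + δ k)
    :
    ∀ k, ‖x (k + 1) - xstar‖ ≤
      (LS * LF) ^ (k + 1) * ‖x 0 - xstar‖ +
        ∑ j ∈ Finset.range (k + 1), LS ^ (j + 1) * LF ^ j * ‖ε (k - j)‖ +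
        ∑ j ∈ Finset.range (k + 1), (LS * LF) ^ j * ‖δ (k - j)‖ := by
  intro k
  have hstep (i : ℕ) :
      ‖x (i + 1) - xstar‖ ≤ LS * LF * ‖x i - xstar‖ + (LS * ‖ε i‖ + ‖δ i‖) := by
    rw [hiter, ← add_assoc]
    exact norm_perturbed_nested_step_sub_le hLS0 hFlip hSlip (hxΩ i) hxstarΩ
      (hFmap _ hxstarΩ) (hFxΩ i) hfix
  have hsplit : ∑ j ∈ range (k + 1), (LS * LF) ^ j * (LS * ‖ε (k - j)‖ + ‖δ (k - j)‖) =
      ∑ j ∈ range (k + 1), LS ^ (j + 1) * LF ^ j * ‖ε (k - j)‖ +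
        ∑ j ∈ range (k + 1), (LS * LF) ^ j * ‖δ (k - j)‖ := by
    rw [← sum_add_distrib]
    exact sum_congr rfl fun j _ => by ring
  rw [add_assoc, ← hsplit]
  exact le_pow_mul_add_sum_of_le_mul_add (u := fun i => ‖x i - xstar‖)
    (b := fun i => LS * ‖ε i‖ + ‖δ i‖) (mul_nonneg hLS0 hLF0) hstep k

theorem nested_perturbed_accumulated_bound
    {n : ℕ} (Ω₁ Ω₂ : Set (EuclideanSpace ℝ (Fin n)))
    (hΩ₁ : IsClosed Ω₁) (hΩ₂ : IsClosed Ω₂)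
    (F S : EuclideanSpace ℝ (Fin n) → EuclideanSpace ℝ (Fin n))
    (hFmap : ∀ x ∈ Ω₁, F x ∈ Ω₂) (hSmap : ∀ x ∈ Ω₂, S x ∈ Ω₁)
    (LF LS : ℝ) (hLF0 : 0 ≤ LF) (hLS0 : 0 ≤ LS) (hLL : LS * LF < 1)
    (hFlip : ∀ x ∈ Ω₁, ∀ y ∈ Ω₁, ‖F x - F y‖ ≤ LF * ‖x - y‖)
    (hSlip : ∀ x ∈ Ω₂, ∀ y ∈ Ω₂, ‖S x - S y‖ ≤ LS * ‖x - y‖)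
    (xstar : EuclideanSpace ℝ (Fin n)) (hxstarΩ : xstar ∈ Ω₁)
    (hfix : S (F xstar) = xstar)
    (x ε δ : ℕ → EuclideanSpace ℝ (Fin n))
    (hxΩ : ∀ k, x k ∈ Ω₁)
    (hFxΩ : ∀ k, F (x k) + ε k ∈ Ω₂)
    (hiter : ∀ k, x (k + 1) = S (F (x k) + ε k) + δ k)
    :
    ∀ k, ‖x (k + 1) - xstar‖ ≤
      (LS * LF) ^ (k + 1) * ‖x 0 - xstar‖ +
        ∑ j ∈ Finset.range (k + 1), LS ^ (j + 1) * LF ^ j * ‖ε (k - j)‖ +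
        ∑ j ∈ Finset.range (k + 1), (LS * LF) ^ j * ‖δ (k - j)‖ :=
  nested_perturbed_accumulated_bound_general Ω₁ Ω₂ F S hFmap LF LS hLF0 hLS0 hFlip hSlip xstar
    hxstarΩ hfix x ε δ hxΩ hFxΩ hiter
end

section
/- Let Ω₁, Ω₂ ⊆ ℝⁿ be closed sets, F : Ω₁ → Ω₂ Lipschitz continuous with constant L_F, S : Ω₂ → Ω₁ Lipschitz continuous with constant L_S, with L_S·L_F < 1, and let x* ∈ Ω₁ be a fixed point of S∘F. Let ε ≥ 0 and let (x^k) ⊆ Ω₁, (ε_k), (δ_k) ⊆ ℝⁿ satisfy F(x^k) + ε_k ∈ Ω₂, x^{k+1} = S(F(x^k) + ε_k) + δ_k, and ‖ε_k‖ ≤ ε and ‖δ_k‖ ≤ ε for all k ≥ 0. If x^k converges to a limit x_ε, then ‖x_ε − x*‖ ≤ ε·(1 + L_S)/(1 − L_S·L_F). -/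
theorem nested_perturbed_constant_perturbation_bound
    {n : ℕ} (Ω₁ Ω₂ : Set (EuclideanSpace ℝ (Fin n)))
    (hΩ₁ : IsClosed Ω₁) (hΩ₂ : IsClosed Ω₂)
    (F S : EuclideanSpace ℝ (Fin n) → EuclideanSpace ℝ (Fin n))
    (hFmap : ∀ x ∈ Ω₁, F x ∈ Ω₂) (hSmap : ∀ x ∈ Ω₂, S x ∈ Ω₁)
    (LF LS : ℝ) (hLF0 : 0 ≤ LF) (hLS0 : 0 ≤ LS) (hLL : LS * LF < 1)
    (hFlip : ∀ x ∈ Ω₁, ∀ y ∈ Ω₁, ‖F x - F y‖ ≤ LF * ‖x - y‖)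
    (hSlip : ∀ x ∈ Ω₂, ∀ y ∈ Ω₂, ‖S x - S y‖ ≤ LS * ‖x - y‖)
    (xstar : EuclideanSpace ℝ (Fin n)) (hxstarΩ : xstar ∈ Ω₁)
    (hfix : S (F xstar) = xstar)
    (x ε δ : ℕ → EuclideanSpace ℝ (Fin n))
    (hxΩ : ∀ k, x k ∈ Ω₁)
    (hFxΩ : ∀ k, F (x k) + ε k ∈ Ω₂)
    (hiter : ∀ k, x (k + 1) = S (F (x k) + ε k) + δ k)
    (e : ℝ) (he : 0 ≤ e)
    (hε : ∀ k, ‖ε k‖ ≤ e) (hδ : ∀ k, ‖δ k‖ ≤ e)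
    (xeps : EuclideanSpace ℝ (Fin n))
    (hconv : Filter.Tendsto x Filter.atTop (nhds xeps)) :
    ‖xeps - xstar‖ ≤ e * (1 + LS) / (1 - LS * LF) := by
  set A : ℝ := ‖xeps - xstar‖ with hAdef
  have hpos : 0 < 1 - LS * LF := by linarith
  -- key step inequality
  have hstep : ∀ k, ‖x (k + 1) - xstar‖ ≤ LS * LF * ‖x k - xstar‖ + (LS * e + e) := by
    intro k
    have h1 : ‖x (k + 1) - xstar‖ ≤ ‖S (F (x k) + ε k) - S (F xstar)‖ + ‖δ k‖ := by
      rw [hiter k]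
      calc ‖S (F (x k) + ε k) + δ k - xstar‖
          = ‖(S (F (x k) + ε k) - S (F xstar)) + δ k‖ := by rw [hfix]; congr 1; abel
        _ ≤ ‖S (F (x k) + ε k) - S (F xstar)‖ + ‖δ k‖ := norm_add_le _ _
    have h2 : ‖S (F (x k) + ε k) - S (F xstar)‖ ≤ LS * ‖F (x k) + ε k - F xstar‖ :=
      hSlip _ (hFxΩ k) _ (hFmap _ hxstarΩ)
    have h3 : ‖F (x k) + ε k - F xstar‖ ≤ LF * ‖x k - xstar‖ + e := by
      calc ‖F (x k) + ε k - F xstar‖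
          = ‖(F (x k) - F xstar) + ε k‖ := by congr 1; abel
        _ ≤ ‖F (x k) - F xstar‖ + ‖ε k‖ := norm_add_le _ _
        _ ≤ LF * ‖x k - xstar‖ + e :=
            add_le_add (hFlip _ (hxΩ k) _ hxstarΩ) (hε k)
    have h4 : LS * ‖F (x k) + ε k - F xstar‖ ≤ LS * (LF * ‖x k - xstar‖ + e) :=
      mul_le_mul_of_nonneg_left h3 hLS0
    have := hδ k
    nlinarith
  -- limits
  have hA : Filter.Tendsto (fun k => ‖x k - xstar‖) Filter.atTop (nhds A) :=
    ((hconv.sub tendsto_const_nhds).norm)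
  have hAshift : Filter.Tendsto (fun k => ‖x (k + 1) - xstar‖) Filter.atTop (nhds A) :=
    hA.comp (Filter.tendsto_add_atTop_nat 1)
  have hrhs : Filter.Tendsto (fun k => LS * LF * ‖x k - xstar‖ + (LS * e + e))
      Filter.atTop (nhds (LS * LF * A + (LS * e + e))) :=
    ((hA.const_mul (LS * LF)).add tendsto_const_nhds)
  have hineq : A ≤ LS * LF * A + (LS * e + e) :=
    le_of_tendsto_of_tendsto' hAshift hrhs hstep
  
  rw [le_div_iff₀ hpos]
  nlinarith
end

section
/- Let Ω₁, Ω₂ ⊆ ℝⁿ be closed sets, F : Ω₁ → Ω₂ Lipschitz continuous with constant L_F, S : Ω₂ → Ω₁ Lipschitz continuous with constant L_S, with L_S·L_F < 1, and let x* ∈ Ω₁ be a fixed point of S∘F. Let ε, δ ≥ 0 and let (x^k) ⊆ Ω₁, (ε_k), (δ_k) ⊆ ℝⁿ satisfy F(x^k) + ε_k ∈ Ω₂, x^{k+1} = S(F(x^k) + ε_k) + δ_k, and ‖ε_k‖ ≤ ε and ‖δ_k‖ ≤ δ for all k ≥ 0. If x^k converges to a limit x_ε, then ‖x_ε − x*‖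 ≤ (ε·L_S + δ)/(1 − L_S·L_F). -/
theorem nested_perturbed_separate_constant_bound
    {n : ℕ} (Ω₁ Ω₂ : Set (EuclideanSpace ℝ (Fin n)))
    (hΩ₁ : IsClosed Ω₁) (hΩ₂ : IsClosed Ω₂)
    (F S : EuclideanSpace ℝ (Fin n) → EuclideanSpace ℝ (Fin n))
    (hFmap : ∀ x ∈ Ω₁, F x ∈ Ω₂) (hSmap : ∀ x ∈ Ω₂, S x ∈ Ω₁)
    (LF LS : ℝ) (hLF0 : 0 ≤ LF) (hLS0 : 0 ≤ LS) (hLL : LS * LF < 1)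
    (hFlip : ∀ x ∈ Ω₁, ∀ y ∈ Ω₁, ‖F x - F y‖ ≤ LF * ‖x - y‖)
    (hSlip : ∀ x ∈ Ω₂, ∀ y ∈ Ω₂, ‖S x - S y‖ ≤ LS * ‖x - y‖)
    (xstar : EuclideanSpace ℝ (Fin n)) (hxstarΩ : xstar ∈ Ω₁)
    (hfix : S (F xstar) = xstar)
    (x ε δ : ℕ → EuclideanSpace ℝ (Fin n))
    (hxΩ : ∀ k, x k ∈ Ω₁)
    (hFxΩ : ∀ k, F (x k) + ε k ∈ Ω₂)
    (hiter : ∀ k, x (k + 1) = S (F (x k) + ε k) + δ k)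
    (e d : ℝ) (he : 0 ≤ e) (hd : 0 ≤ d)
    (hε : ∀ k, ‖ε k‖ ≤ e) (hδ : ∀ k, ‖δ k‖ ≤ d)
    (xeps : EuclideanSpace ℝ (Fin n))
    (hconv : Filter.Tendsto x Filter.atTop (nhds xeps)) :
    ‖xeps - xstar‖ ≤ (e * LS + d) / (1 - LS * LF) := by
  set q := LS * LF with hq
  have hq1 : 0 < 1 - q := by linarith
  -- one-step bound
  have hstep : ∀ k, ‖x (k + 1) - xstar‖ ≤ q * ‖x k - xstar‖ + (e * LS + d) := by
    intro k
    have h1 : ‖x (k + 1) - xstar‖ ≤ ‖S (F (x k) + ε k) - S (F xstar)‖ + ‖δ k‖ := by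
      rw [hiter k]
      calc ‖S (F (x k) + ε k) + δ k - xstar‖
          = ‖(S (F (x k) + ε k) - S (F xstar)) + δ k‖ := by rw [hfix]; congr 1; abel
        _ ≤ ‖S (F (x k) + ε k) - S (F xstar)‖ + ‖δ k‖ := norm_add_le _ _
    have h2 : ‖S (F (x k) + ε k) - S (F xstar)‖ ≤ LS * ‖F (x k) + ε k - F xstar‖ :=
      hSlip _ (hFxΩ k) _ (hFmap _ hxstarΩ)
    have h3 : ‖F (x k) + ε k - F xstar‖ ≤ LF * ‖x k - xstar‖ + e := by
      calc ‖F (x k) + ε k - F xstar‖ = ‖(F (x k) - F xstar) + ε k‖ := by congr 1; abel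
        _ ≤ ‖F (x k) - F xstar‖ + ‖ε k‖ := norm_add_le _ _
        _ ≤ LF * ‖x k - xstar‖ + e := add_le_add (hFlip _ (hxΩ k) _ hxstarΩ) (hε k)
    have h4 : LS * ‖F (x k) + ε k - F xstar‖ ≤ LS * (LF * ‖x k - xstar‖ + e) :=
      mul_le_mul_of_nonneg_left h3 hLS0
    have := hδ k
    calc ‖x (k + 1) - xstar‖ ≤ LS * (LF * ‖x k - xstar‖ + e) + ‖δ k‖ := by linarith
      _ ≤ q * ‖x k - xstar‖ + (e * LS + d) := by rw [hq]; nlinarith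
  -- pass to the limit
  set a := ‖xeps - xstar‖ with ha
  have hlim1 : Filter.Tendsto (fun k => ‖x (k + 1) - xstar‖) Filter.atTop (nhds a) := by
    have : Filter.Tendsto (fun k => x (k + 1)) Filter.atTop (nhds xeps) :=
      hconv.comp (Filter.tendsto_add_atTop_nat 1)
    exact (this.sub tendsto_const_nhds).norm
  have hlim2 : Filter.Tendsto (fun k => q * ‖x k - xstar‖ + (e * LS + d)) Filter.atTop
      (nhds (q * a + (e * LS + d))) := by
    exact (((hconv.sub tendsto_const_nhds).norm.const_mul q).add tendsto_const_nhds)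
  have hle : a ≤ q * a + (e * LS + d) :=
    le_of_tendsto_of_tendsto' hlim1 hlim2 hstep
  rw [le_div_iff₀ hq1]
  nlinarith
end
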